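/- Consider the greedy construction that iterates: while there exists a point p in P such that no point within distance R of p has been assigned to a cluster, create a new cluster centered at p containing all points within distance R of p; then assign every remaining point to the cluster of any assigned point within distance R of it. If R >= max_{p in P} rho_r(p), then every cluster has size at least r and every point is at distance at most 2R from its cluster center; hence the result is a 4-approximate r-gather solution. -/

import Mathlib

/-!
A greedy center `s` has `ρ_r(s) ≤ R` and its cluster contains every point within `R` of it,
hence at least `r` points; any other point reaches its center in two steps of length `≤ R`.
Conversely, in an `r`-gather clustering of cost `ρ` the cluster of `p` lies in the ball of
radius `2ρ` about `p`, so `ρ_r(p) ≤ 2ρ`, i.e. `R ≤ 2ρ`, and `2R ≤ 4ρ`.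
-/

open Finset

/-- The distance from `p` to its `r`-th nearest neighbor in `P`. -/
noncomputable def rhoNN {X : Type*} [MetricSpace X] (P : Finset X) (r : ℕ) (p : X) : ℝ :=
  sInf {R : ℝ | 0 ≤ R ∧ r ≤ (P.filter fun q => dist p q ≤ R).card}

lemma isClosed_setOf_le_card_filter_le {ι α : Type*} [LinearOrder α] [TopologicalSpace α]
    [ClosedIciTopology α] (s : Finset ι) (g : ι → α) (r : ℕ) :
    IsClosed {R : α | r ≤ #(s.filter fun i => g i ≤ R)} := by
  have h : {R : α | r ≤ #(s.filter fun i => g i ≤ R)} =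
      ⋃ t ∈ s.powersetCard r, ⋂ i ∈ t, Set.Ici (g i) := by
    ext R
    simp only [Set.mem_ofPred_eq, le_card_iff_exists_subset_card, subset_iff, mem_filter,
      forall_and, Set.mem_iUnion, Set.mem_iInter, Set.mem_Ici, mem_powersetCard, exists_prop]
    tauto
  rw [h]
  exact (s.powersetCard r).finite_toSet.isClosed_biUnion fun t _ =>
    isClosed_biInter fun i _ => isClosed_Ici

section rhoNN

variable {X : Type*} [MetricSpace X] {P : Finset X} {r : ℕ} {p : X}

lemma rhoNN_le {R : ℝ} (h0 : 0 ≤ R) (hR : r ≤ #(P.filter fun q => dist p q ≤ R)) :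
    rhoNN P r p ≤ R :=
  csInf_le ⟨0, fun _ h => h.1⟩ ⟨h0, hR⟩

lemma le_card_filter_dist_le_rhoNN (hcard : r ≤ #P) :
    r ≤ #(P.filter fun q => dist p q ≤ rhoNN P r p) := by
  have hbig : r ≤ #(P.filter fun q => dist p q ≤ ∑ q ∈ P, dist p q) := by
    rwa [filter_true_of_mem fun q hq =>
      single_le_sum (f := fun q => dist p q) (fun _ _ => dist_nonneg) hq]
  have hmem := (isClosed_Ici.inter (isClosed_setOf_le_card_filter_le P (dist p) r)).csInf_mem
    ⟨_, sum_nonneg fun _ _ => dist_nonneg, hbig⟩ ⟨0, fun _ h => h.1⟩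
  exact hmem.2

lemma rhoNN_le_two_mul_of_cluster [DecidableEq X] {f : X → X} {ρ : ℝ}
    (hf : r ≤ #(P.filter fun q => f q = f p)) (hρ : ∀ q ∈ P, dist q (f q) ≤ ρ) (hp : p ∈ P) :
    rhoNN P r p ≤ 2 * ρ := by
  refine rhoNN_le (by linarith [hρ p hp, dist_nonneg (x := p) (y := f p)])
    (hf.trans (card_le_card fun q hq => ?_))
  obtain ⟨hqP, hfq⟩ := mem_filter.1 hq
  refine mem_filter.2 ⟨hqP, ?_⟩
  calc dist p q ≤ dist p (f p) + dist q (f q) := by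
        rw [← hfq, dist_comm q]; exact dist_triangle _ _ _
    _ ≤ 2 * ρ := by linarith [hρ p hp, hρ q hqP]

lemma le_card_filter_eq_of_ball [DecidableEq X] {c : X → X} {s : X} {R : ℝ} (hcard : r ≤ #P)
    (hs : rhoNN P r s ≤ R) (hball : ∀ q ∈ P, dist q s ≤ R → c q = s) :
    r ≤ #(P.filter fun q => c q = s) :=
  (le_card_filter_dist_le_rhoNN (p := s) hcard).trans <| card_le_card fun q hq => by
    obtain ⟨hqP, hq⟩ := mem_filter.1 hq
    exact mem_filter.2 ⟨hqP, hball q hqP (by rw [dist_comm]; exact hq.trans hs)⟩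

end rhoNN

open Classical in
theorem stmt9_general {X : Type*} [MetricSpace X] (P : Finset X) (r : ℕ)
    (hcard : r ≤ P.card) (hne : P.Nonempty)
    (R : ℝ) (hR : R = P.sup' hne fun p => rhoNN P r p)
    (S : Finset X) (hSP : S ⊆ P)
    (c : X → X)
    -- every point is assigned to a center from `S`
    (hcS : ∀ p ∈ P, c p ∈ S)
    -- each center's cluster contains all points within distance `R` of it
    (hball : ∀ s ∈ S, ∀ p ∈ P, dist p s ≤ R → c p = s)
    -- every point is assigned via an assigned point within distance `R` of it
    (hassign : ∀ p ∈ P, ∃ p' ∈ P, dist p p' ≤ R ∧ c p' = c p ∧ dist p' (c p') ≤ R) :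
    (∀ p ∈ P, r ≤ (P.filter fun q => c q = c p).card) ∧
    (∀ p ∈ P, dist p (c p) ≤ 2 * R) ∧
    (∀ f : X → X, (∀ p ∈ P, r ≤ (P.filter fun q => f q = f p).card) →
      ∀ p ∈ P, dist p (c p) ≤ 4 * P.sup' hne fun q => dist q (f q)) := by
  have hradius : ∀ p ∈ P, dist p (c p) ≤ 2 * R := by
    intro p hp
    obtain ⟨p', -, hpp', hcp', hp'c⟩ := hassign p hp
    calc dist p (c p) ≤ dist p p' + dist p' (c p') := hcp' ▸ dist_triangle _ _ _
      _ ≤ 2 * R := by linarith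
  refine ⟨fun p hp => ?_, hradius, fun f hf p hp => ?_⟩
  · have hcenter : rhoNN P r (c p) ≤ R := hR ▸ le_sup' _ (hSP (hcS p hp))
    exact le_card_filter_eq_of_ball hcard hcenter (hball _ (hcS p hp))
  · have hlower : R ≤ 2 * P.sup' hne fun q => dist q (f q) := hR ▸ sup'_le _ _ fun q hq =>
      rhoNN_le_two_mul_of_cluster (hf q hq) (fun x hx => le_sup' (fun y => dist y (f y)) hx) hq
    linarith [hradius p hp]

open Classical in
/-- The greedy construction: with `R = max_{p ∈ P} ρ_r(p)`, centers `S` chosen greedily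
(a new center is created only when no point within distance `R` of it is assigned;
its cluster receives all points within distance `R`), and every remaining point
assigned to the cluster of an assigned point within distance `R` of it. Then every
cluster has size at least `r`, every point is within distance `2R` of its center, and
the result is a 4-approximate `r`-gather solution: the radius is at most `4` times
the cost of any valid `r`-gather clustering `f`. -/
theorem stmt9 {X : Type*} [MetricSpace X] (P : Finset X) (r : ℕ) (hr : 1 ≤ r)
    (hcard : r ≤ P.card) (hne : P.Nonempty)
    (R : ℝ) (hR : R = P.sup' hne fun p => rhoNN P r p)
    (S : Finset X) (hSP : S ⊆ P)
    (c : X → X)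
    -- every point is assigned to a center from `S`
    (hcS : ∀ p ∈ P, c p ∈ S)
    -- greedy invariant: no point is within distance `R` of two distinct centers
    (hmutex : ∀ s ∈ S, ∀ s' ∈ S, s ≠ s' → ¬ ∃ p ∈ P, dist p s ≤ R ∧ dist p s' ≤ R)
    -- each center's cluster contains all points within distance `R` of it
    (hball : ∀ s ∈ S, ∀ p ∈ P, dist p s ≤ R → c p = s)
    -- every point is assigned via an assigned point within distance `R` of it
    (hassign : ∀ p ∈ P, ∃ p' ∈ P, dist p p' ≤ R ∧ c p' = c p ∧ dist p' (c p') ≤ R) :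
    (∀ p ∈ P, r ≤ (P.filter fun q => c q = c p).card) ∧
    (∀ p ∈ P, dist p (c p) ≤ 2 * R) ∧
    (∀ f : X → X, (∀ p ∈ P, r ≤ (P.filter fun q => f q = f p).card) →
      ∀ p ∈ P, dist p (c p) ≤ 4 * P.sup' hne fun q => dist q (f q)) :=
  stmt9_general P r hcard hne R hR S hSP c hcS hball hassign
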